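/- arXiv:1902.11051 — 3 statements merged into one kernel-verified Lean document; each statement's English description precedes it below -/
import Mathlib

section
/- Let ρ₁ > 0, 0 ≤ a ≤ 1, let c : ℝ → ℝ satisfy a ≤ c(x) ≤ 1 for all x ≥ ρ₁, let h : ℝ → ℝ be differentiable on [ρ₁, ∞) with h'(x) = c(x) h(x) / x for x ≥ ρ₁ and h(ρ₁) = h₁ > 0, and let p : ℝ → ℝ be differentiable on [ρ₁, ∞) with p'(x) = c(x) h(x) for x ≥ ρ₁ and p(ρ₁) = p₁. Then for all x ≥ ρ₁: (a ρ₁ h₁ / (1 + a)) · ((x/ρ₁)^{1+a} − 1) ≤ p(x) − p₁ ≤ (ρ₁ h₁ / 2) · ((x/ρ₁)² − 1). -/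
/-!
Since `(h²)' = 2 c h² / x ≥ 0` and `h(ρ₁) > 0`, the enthalpy never vanishes, so it stays positive.
Then `(h x^(-b))' = (c - b) h x^(-b) / x` has the sign of `c - b`, which traps `h` between
`h₁ (x/ρ₁)^a` and `h₁ (x/ρ₁)`. Hence `p' = c h` lies between `a h₁ (x/ρ₁)^a` and `h₁ (x/ρ₁)`,
whose primitives vanishing at `ρ₁` are the two bounds.
-/

open Set

theorem monotoneOn_Ici_of_hasDerivAt_nonneg {ρ : ℝ} {f f' : ℝ → ℝ}
    (hf : ∀ x ≥ ρ, HasDerivAt f (f' x) x) (hf' : ∀ x ≥ ρ, 0 ≤ f' x) :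
    MonotoneOn f (Ici ρ) := by
  refine monotoneOn_of_deriv_nonneg (convex_Ici ρ)
    (fun x hx => (hf x hx).continuousAt.continuousWithinAt) ?_ ?_ <;> rw [interior_Ici]
  · exact fun x hx => (hf x (le_of_lt hx)).differentiableAt.differentiableWithinAt
  · exact fun x hx => (hf x (le_of_lt hx)).deriv ▸ hf' x (le_of_lt hx)

theorem mul_rpow_neg_mul_rpow {x ρ : ℝ} (hx : 0 < x) (hρ : 0 < ρ) (y b : ℝ) :
    y * ρ ^ (-b) * x ^ b = y * (x / ρ) ^ b := by
  rw [Real.div_rpow hx.le hρ.le, Real.rpow_neg hρ.le]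
  ring

theorem sub_le_sub_of_hasDerivAt_le {ρ : ℝ} {f f' g g' : ℝ → ℝ}
    (hf : ∀ x ≥ ρ, HasDerivAt f (f' x) x) (hg : ∀ x ≥ ρ, HasDerivAt g (g' x) x)
    (hfg : ∀ x ≥ ρ, f' x ≤ g' x) : ∀ x ≥ ρ, f x - f ρ ≤ g x - g ρ := by
  have hmono : MonotoneOn (fun x => g x - f x) (Ici ρ) :=
    monotoneOn_Ici_of_hasDerivAt_nonneg (fun x hx => (hg x hx).sub (hf x hx))
      (fun x hx => sub_nonneg.mpr (hfg x hx))
  intro x hx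
  have := hmono self_mem_Ici hx hx
  simp only at this
  linarith

theorem hasDerivAt_div_one_add_mul_rpow_sub_one {ρ b t : ℝ} (hρ : 0 < ρ) (hb : 1 + b ≠ 0)
    (ht : 0 < t) :
    HasDerivAt (fun t => ρ / (1 + b) * ((t / ρ) ^ (1 + b) - 1)) ((t / ρ) ^ b) t := by
  have hdiv : HasDerivAt (fun t : ℝ => t / ρ) (1 / ρ) t := by
    simpa using (hasDerivAt_id t).div_const ρ
  refine (((hdiv.rpow_const (p := 1 + b) (Or.inl (by positivity))).sub_const 1).const_mul
    (ρ / (1 + b))).congr_deriv ?_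
  rw [add_sub_cancel_left]
  field_simp

section Enthalpy

variable {ρ₁ b : ℝ} {c h : ℝ → ℝ}

theorem hasDerivAt_mul_rpow_neg {x : ℝ} (hh : HasDerivAt h (c x * h x / x) x) (hx : 0 < x) :
    HasDerivAt (fun t => h t * t ^ (-b)) ((c x - b) * h x * x ^ (-b) / x) x := by
  refine (hh.mul (Real.hasDerivAt_rpow_const (p := -b) (Or.inl hx.ne'))).congr_deriv ?_
  rw [Real.rpow_sub hx, Real.rpow_one]
  ring

theorem mul_div_rpow_le_of_nonneg (hρ₁ : 0 < ρ₁) (hh : ∀ x ≥ ρ₁, HasDerivAt h (c x * h x / x) x)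
    (hsign : ∀ x ≥ ρ₁, 0 ≤ (c x - b) * h x) :
    ∀ x ≥ ρ₁, h ρ₁ * (x / ρ₁) ^ b ≤ h x := by
  have hmono : MonotoneOn (fun t => h t * t ^ (-b)) (Ici ρ₁) :=
    monotoneOn_Ici_of_hasDerivAt_nonneg
      (fun x hx => hasDerivAt_mul_rpow_neg (hh x hx) (hρ₁.trans_le hx)) fun x hx => by
        have := hsign x hx
        have : 0 < x := hρ₁.trans_le hx
        positivity
  intro x hx
  have hx0 : 0 < x := hρ₁.trans_le hx
  calc h ρ₁ * (x / ρ₁) ^ b = h ρ₁ * ρ₁ ^ (-b) * x ^ b := (mul_rpow_neg_mul_rpow hx0 hρ₁ _ _).symm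
    _ ≤ h x * x ^ (-b) * x ^ b :=
      mul_le_mul_of_nonneg_right (hmono self_mem_Ici hx hx) (by positivity)
    _ = h x := by rw [mul_rpow_neg_mul_rpow hx0 hx0, div_self hx0.ne', Real.one_rpow, mul_one]

theorem le_mul_div_rpow_of_nonpos (hρ₁ : 0 < ρ₁) (hh : ∀ x ≥ ρ₁, HasDerivAt h (c x * h x / x) x)
    (hsign : ∀ x ≥ ρ₁, (c x - b) * h x ≤ 0) :
    ∀ x ≥ ρ₁, h x ≤ h ρ₁ * (x / ρ₁) ^ b := by
  intro x hx
  have := mul_div_rpow_le_of_nonneg (h := fun x => -h x) (b := b) hρ₁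
    (fun x hx => (hh x hx).neg.congr_deriv (by ring)) (fun x hx => by nlinarith [hsign x hx]) x hx
  linarith

theorem enthalpy_pos (hρ₁ : 0 < ρ₁) (hc : ∀ x ≥ ρ₁, 0 ≤ c x)
    (hh : ∀ x ≥ ρ₁, HasDerivAt h (c x * h x / x) x) (hh₁ : 0 < h ρ₁) :
    ∀ x ≥ ρ₁, 0 < h x := by
  have hsq : MonotoneOn (fun x => h x * h x) (Ici ρ₁) :=
    monotoneOn_Ici_of_hasDerivAt_nonneg (fun x hx => (hh x hx).mul (hh x hx)) fun x hx => by
      have : c x * h x / x * h x + h x * (c x * h x / x) = 2 * c x * (h x * h x) / x := by ring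
      rw [this]
      exact div_nonneg (mul_nonneg (mul_nonneg zero_le_two (hc x hx)) (mul_self_nonneg _))
        (hρ₁.trans_le hx).le
  have hne : ∀ x ≥ ρ₁, h x ≠ 0 := fun x hx h0 => by
    have := hsq self_mem_Ici hx hx
    simp only [h0, mul_zero] at this
    nlinarith
  intro x hx
  by_contra! hneg
  obtain ⟨t, ht, h0⟩ := intermediate_value_Icc' hx
    (fun t ht => (hh t ht.1).continuousAt.continuousWithinAt) ⟨hneg, hh₁.le⟩
  exact hne t ht.1 h0

end Enthalpy

theorem pressure_bounds_general
    (ρ₁ a h₁ p₁ : ℝ) (hρ₁ : 0 < ρ₁) (ha₀ : 0 ≤ a)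
    (c h p : ℝ → ℝ)
    (hc : ∀ x ≥ ρ₁, a ≤ c x ∧ c x ≤ 1)
    (hh : ∀ x ≥ ρ₁, HasDerivAt h (c x * h x / x) x)
    (hhinit : h ρ₁ = h₁) (hh₁ : 0 < h₁)
    (hp : ∀ x ≥ ρ₁, HasDerivAt p (c x * h x) x)
    (hpinit : p ρ₁ = p₁) :
    ∀ x ≥ ρ₁,
      a * ρ₁ * h₁ / (1 + a) * ((x / ρ₁) ^ (1 + a) - 1) ≤ p x - p₁ ∧
      p x - p₁ ≤ ρ₁ * h₁ / 2 * ((x / ρ₁) ^ (2 : ℕ) - 1) := by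
  subst hhinit hpinit
  have hpos := enthalpy_pos hρ₁ (fun x hx => ha₀.trans (hc x hx).1) hh hh₁
  have hlow := mul_div_rpow_le_of_nonneg (b := a) hρ₁ hh fun x hx =>
    mul_nonneg (sub_nonneg.2 (hc x hx).1) (hpos x hx).le
  have hup := le_mul_div_rpow_of_nonpos (b := 1) hρ₁ hh fun x hx =>
    mul_nonpos_of_nonpos_of_nonneg (sub_nonpos.2 (hc x hx).2) (hpos x hx).le
  have hF {b : ℝ} (hb : 1 + b ≠ 0) (x : ℝ) (hx : x ≥ ρ₁) :=
    (hasDerivAt_div_one_add_mul_rpow_sub_one hρ₁ hb (hρ₁.trans_le hx)).const_mul (h ρ₁)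
  intro x hx
  constructor
  · have hlower := sub_le_sub_of_hasDerivAt_le
      (fun x hx => (hF (b := a) (by linarith) x hx).const_mul a) hp
      (fun t ht => (mul_le_mul_of_nonneg_left (hlow t ht) ha₀).trans
        (mul_le_mul_of_nonneg_right (hc t ht).1 (hpos t ht).le)) x hx
    simp only [div_self hρ₁.ne', Real.one_rpow, sub_self, mul_zero, sub_zero] at hlower
    exact le_of_eq_of_le (by ring) hlower
  · have hupper := sub_le_sub_of_hasDerivAt_le hp (hF (b := 1) (by norm_num))
      (fun t ht => (mul_le_of_le_one_left (hpos t ht).le (hc t ht).2).trans (hup t ht)) x hx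
    simp only [div_self hρ₁.ne', one_add_one_eq_two, Real.rpow_two] at hupper
    linarith

/-- Pressure bounds for an irrotational perfect fluid: with `dh/dρ = c_s² h / ρ`,
`dp/dρ = c_s² h`, and causality bounds `a ≤ c_s² ≤ 1`, one has
`(a ρ₁ h₁/(1+a)) ((ρ/ρ₁)^(1+a) − 1) ≤ p − p₁ ≤ (ρ₁ h₁/2) ((ρ/ρ₁)² − 1)`. -/
theorem pressure_bounds
    (ρ₁ a h₁ p₁ : ℝ) (hρ₁ : 0 < ρ₁) (ha₀ : 0 ≤ a) (ha₁ : a ≤ 1)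
    (c h p : ℝ → ℝ)
    (hc : ∀ x ≥ ρ₁, a ≤ c x ∧ c x ≤ 1)
    (hh : ∀ x ≥ ρ₁, HasDerivAt h (c x * h x / x) x)
    (hhinit : h ρ₁ = h₁) (hh₁ : 0 < h₁)
    (hp : ∀ x ≥ ρ₁, HasDerivAt p (c x * h x) x)
    (hpinit : p ρ₁ = p₁) :
    ∀ x ≥ ρ₁,
      a * ρ₁ * h₁ / (1 + a) * ((x / ρ₁) ^ (1 + a) - 1) ≤ p x - p₁ ∧
      p x - p₁ ≤ ρ₁ * h₁ / 2 * ((x / ρ₁) ^ (2 : ℕ) - 1) :=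
  pressure_bounds_general ρ₁ a h₁ p₁ hρ₁ ha₀ c h p hc hh hhinit hh₁ hp hpinit
end

section
/- Let t₀, k > 0, θ₀ > 0, h₀ > 0, ρ₀ > 0 be real numbers. Let c, θ : ℝ → ℝ be continuous with 0 < c(t) ≤ 1 and c(t)θ(t) ≥ k for all t ≥ t₀. Let h, ρ : ℝ → ℝ be differentiable with h'(t) = −c(t)θ(t)h(t), ρ'(t) = −θ(t)ρ(t) for all t ≥ t₀, h(t₀) = h₀, ρ(t₀) = ρ₀. Let ε, p : ℝ → ℝ satisfy ε(t) + p(t) = ρ(t)h(t), ε(t) ≥ 0, and p(t) + ε(t)/3 ≥ 0 for all t ≥ t₀. Then ε(t) → 0 and p(t) → 0 as t → ∞. -/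
open Filter

/-- Proposition 2: a perfect fluid along an expanding isotropic congruence with conserved
rest-mass (`ρ̇ = −θρ`, `ḣ = −c_s²θh`), speed of sound `c_s²(t) ∈ (0,1]` with `c_s²θ ≥ k > 0`,
and satisfying the Strong Energy Condition (`ε ≥ 0`, `p + ε/3 ≥ 0`) has `ε → 0` and
`p → 0` asymptotically. -/
theorem prop2_SEC_energy_pressure_vanish
    (t₀ k θ₀ h₀ ρ₀ : ℝ) (hk : 0 < k) (hθ₀ : 0 < θ₀) (hh₀ : 0 < h₀) (hρ₀ : 0 < ρ₀)
    (c θ h ρ ε p : ℝ → ℝ) (hccont : Continuous c) (hθcont : Continuous θ)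
    (hc : ∀ t ≥ t₀, 0 < c t ∧ c t ≤ 1)
    (hcθ : ∀ t ≥ t₀, k ≤ c t * θ t)
    (hh : ∀ t ≥ t₀, HasDerivAt h (-(c t * θ t * h t)) t)
    (hρ : ∀ t ≥ t₀, HasDerivAt ρ (-(θ t * ρ t)) t)
    (hhinit : h t₀ = h₀) (hρinit : ρ t₀ = ρ₀)
    (hεp : ∀ t ≥ t₀, ε t + p t = ρ t * h t)
    (hεpos : ∀ t ≥ t₀, 0 ≤ ε t)
    (hSEC : ∀ t ≥ t₀, 0 ≤ p t + ε t / 3) :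
    Tendsto ε atTop (nhds 0) ∧ Tendsto p atTop (nhds 0) := by
  set f : ℝ → ℝ := fun t => ρ t * h t with hf
  -- f is nonnegative on [t₀, ∞)
  have hfpos : ∀ t ≥ t₀, 0 ≤ f t := by
    intro t ht
    have h1 := hεpos t ht
    have h2 := hSEC t ht
    have h3 := hεp t ht
    simp only [hf]
    linarith
  -- θ t ≥ k for t ≥ t₀
  have hθk : ∀ t ≥ t₀, k ≤ θ t := by
    intro t ht
    have h1 := hcθ t ht
    have h2 := (hc t ht).1
    have h3 := (hc t ht).2
    nlinarith
  -- derivative of f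
  have hfderiv : ∀ t ≥ t₀, HasDerivAt f (-(θ t * ρ t) * h t + ρ t * (-(c t * θ t * h t))) t :=
    fun t ht => (hρ t ht).mul (hh t ht)
  -- auxiliary g t = f t * exp (2k (t - t₀)) is antitone on [t₀, ∞)
  set g : ℝ → ℝ := fun t => f t * Real.exp (2 * k * (t - t₀)) with hg
  have hgderiv : ∀ t ≥ t₀, HasDerivAt g
      ((-(θ t * ρ t) * h t + ρ t * (-(c t * θ t * h t))) * Real.exp (2 * k * (t - t₀))
        + f t * (Real.exp (2 * k * (t - t₀)) * (2 * k))) t := by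
    intro t ht
    have he : HasDerivAt (fun t => Real.exp (2 * k * (t - t₀)))
        (Real.exp (2 * k * (t - t₀)) * (2 * k)) t := by
      have : HasDerivAt (fun t : ℝ => 2 * k * (t - t₀)) (2 * k) t := by
        simpa using (((hasDerivAt_id t).sub_const t₀).const_mul (2 * k))
      simpa using this.exp
    exact (hfderiv t ht).mul he
  have hganti : AntitoneOn g (Set.Ici t₀) := by
    apply antitoneOn_of_deriv_nonpos (convex_Ici t₀)
    · intro t ht
      exact ((hgderiv t ht).continuousAt).continuousWithinAt
    · intro t ht
      rw [interior_Ici] at ht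
      exact (hgderiv t (le_of_lt ht)).differentiableAt.differentiableWithinAt
    · intro t ht
      rw [interior_Ici] at ht
      have ht' : t₀ ≤ t := le_of_lt ht
      rw [(hgderiv t ht').deriv]
      have hE : 0 ≤ Real.exp (2 * k * (t - t₀)) := (Real.exp_pos _).le
      have h1 := hcθ t ht'
      have h2 := hθk t ht'
      have h3 := hfpos t ht'
      have : -(θ t * ρ t) * h t + ρ t * (-(c t * θ t * h t)) + 2 * k * f t ≤ 0 := by
        have : θ t * f t + c t * θ t * f t ≥ 2 * k * f t := by nlinarith
        simp only [hf] at this ⊢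
        nlinarith
      nlinarith
  -- exponential bound
  have hbound : ∀ t ≥ t₀, f t ≤ f t₀ * Real.exp (-(2 * k) * (t - t₀)) := by
    intro t ht
    have := hganti (Set.self_mem_Ici) ht ht
    simp only [hg] at this
    rw [sub_self, mul_zero, Real.exp_zero, mul_one] at this
    have hE : 0 < Real.exp (2 * k * (t - t₀)) := Real.exp_pos _
    rw [neg_mul, Real.exp_neg, ← div_eq_mul_inv, le_div_iff₀ hE]
    linarith [this]
  -- the bound tends to 0
  have hbtend : Tendsto (fun t => f t₀ * Real.exp (-(2 * k) * (t - t₀))) atTop (nhds 0) := by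
    rw [show (0 : ℝ) = f t₀ * 0 by ring]
    apply Tendsto.const_mul
    apply Real.tendsto_exp_atBot.comp
    have h1 : Tendsto (fun t : ℝ => -(2 * k) * (t - t₀)) atTop atBot := by
      have := (tendsto_atTop_add_const_right atTop (-t₀) tendsto_id).const_mul_atTop_of_neg
        (show -(2 * k) < 0 by linarith)
      simpa [sub_eq_add_neg] using this
    exact h1
  -- f tends to 0
  have hftend : Tendsto f atTop (nhds 0) := by
    apply squeeze_zero' (eventually_atTop.2 ⟨t₀, hfpos⟩)
      (eventually_atTop.2 ⟨t₀, hbound⟩) hbtend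
  -- ε tends to 0 by squeeze: 0 ≤ ε ≤ (3/2) f
  have hεtend : Tendsto ε atTop (nhds 0) := by
    apply squeeze_zero' (eventually_atTop.2 ⟨t₀, hεpos⟩)
      (g := fun t => (3 / 2 : ℝ) * f t)
    · apply eventually_atTop.2 ⟨t₀, ?_⟩
      intro t ht
      have h1 := hSEC t ht
      have h2 := hεp t ht
      simp only [hf]
      linarith
    · simpa using hftend.const_mul (3 / 2 : ℝ)
  refine ⟨hεtend, ?_⟩
  have : Tendsto (fun t => f t - ε t) atTop (nhds 0) := by
    simpa using hftend.sub hεtend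
  apply this.congr'
  filter_upwards [eventually_ge_atTop t₀] with t ht
  have := hεp t ht
  simp only [hf]
  linarith
end

section
/- Let t₀, k > 0, Ξ, h₀ > 0, ρ₀ > 0 be real numbers. Let c, θ : ℝ → ℝ be continuous with 0 < c(t) ≤ 1 and c(t)θ(t) ≥ k for all t ≥ t₀, and let θ be differentiable on [t₀, ∞) with θ'(t) ≤ Ξ for all t ≥ t₀. Let h, ρ : ℝ → ℝ be differentiable with h'(t) = −c(t)θ(t)h(t), ρ'(t) = −θ(t)ρ(t) for all t ≥ t₀, h(t₀) = h₀, ρ(t₀) = ρ₀. Let ε, p : ℝ → ℝ satisfy ε(t) + p(t) = ρ(t)h(t) and θ'(t) = −(3/2)(ε(t) + p(t)) for all t ≥ t₀. Then ε(t) + p(t) → 0 as t → ∞, and −(3/2)(ε(t) + p(t)) ≤ Ξ for all t ≥ t₀. -/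
open Filter Real Set

/-! Since `ε + p = ρh`, the two conservation laws give `(ρh)' = -(1 + c_s²) θ ρh`, and the rate
`(1 + c_s²) θ` is at least `k` because `c_s² θ ≥ k > 0` forces `θ > 0`. A solution of `F' = -g F`
with `g ≥ κ > 0` decays like `e^{-κt}`, since `F² e^{2κt}` is nonincreasing. -/

section DecayOfLinearODE

variable {F g : ℝ → ℝ} {t₀ κ : ℝ}

lemma antitoneOn_sq_mul_exp_of_hasDerivAt_neg_mul
    (hF : ∀ t ≥ t₀, HasDerivAt F (-(g t * F t)) t) (hg : ∀ t ≥ t₀, κ ≤ g t) :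
    AntitoneOn (fun t => F t ^ 2 * exp (2 * κ * t)) (Ici t₀) := by
  have hderiv : ∀ t ≥ t₀, HasDerivAt (fun t => F t ^ 2 * exp (2 * κ * t))
      (2 * (κ - g t) * (F t ^ 2 * exp (2 * κ * t))) t := fun t ht =>
    (((hF t ht).fun_pow 2).fun_mul ((hasDerivAt_id' t).const_mul (2 * κ)).exp).congr_deriv
      (by norm_num; ring)
  refine antitoneOn_of_hasDerivWithinAt_nonpos (convex_Ici t₀)
    (fun t ht => (hderiv t ht).continuousAt.continuousWithinAt)
    (fun t ht => (hderiv t (interior_subset ht)).hasDerivWithinAt) fun t ht => ?_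
  have hκg := hg t (interior_subset ht)
  have hnonneg : 0 ≤ F t ^ 2 * exp (2 * κ * t) := by positivity
  nlinarith

lemma sq_le_mul_exp_of_hasDerivAt_neg_mul
    (hF : ∀ t ≥ t₀, HasDerivAt F (-(g t * F t)) t) (hg : ∀ t ≥ t₀, κ ≤ g t) {t : ℝ} (ht : t₀ ≤ t) :
    F t ^ 2 ≤ F t₀ ^ 2 * exp (2 * κ * t₀) * exp (-(2 * κ * t)) := by
  have hmono := antitoneOn_sq_mul_exp_of_hasDerivAt_neg_mul hF hg
    self_mem_Ici (ht : t ∈ Ici t₀) ht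
  calc F t ^ 2 = F t ^ 2 * exp (2 * κ * t) * exp (-(2 * κ * t)) := by
        rw [mul_assoc, ← exp_add, add_neg_cancel, exp_zero, mul_one]
    _ ≤ _ := by gcongr

lemma tendsto_zero_of_hasDerivAt_neg_mul (hκ : 0 < κ)
    (hF : ∀ t ≥ t₀, HasDerivAt F (-(g t * F t)) t) (hg : ∀ t ≥ t₀, κ ≤ g t) :
    Tendsto F atTop (nhds 0) := by
  have hexp : Tendsto (fun t => exp (-(2 * κ * t))) atTop (nhds 0) :=
    tendsto_exp_neg_atTop_nhds_zero.comp (tendsto_id.const_mul_atTop (by positivity))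
  have hsq : Tendsto (fun t => F t ^ 2) atTop (nhds 0) := by
    refine squeeze_zero' (Eventually.of_forall fun t => sq_nonneg (F t)) ?_
      (by simpa using hexp.const_mul (F t₀ ^ 2 * exp (2 * κ * t₀)))
    filter_upwards [eventually_ge_atTop t₀] with t ht
    exact sq_le_mul_exp_of_hasDerivAt_neg_mul hF hg ht
  refine (tendsto_zero_iff_abs_tendsto_zero F).2 ?_
  simpa only [Function.comp_def, sqrt_sq_eq_abs, sqrt_zero] using hsq.sqrt

end DecayOfLinearODE

theorem prop3_bounded_expansion_general
    (t₀ k Ξ : ℝ) (hk : 0 < k)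
    (c θ θ' h ρ ε p : ℝ → ℝ)
    (hc : ∀ t ≥ t₀, 0 < c t ∧ c t ≤ 1)
    (hcθ : ∀ t ≥ t₀, k ≤ c t * θ t)
    (hθ' : ∀ t ≥ t₀, θ' t ≤ Ξ)
    (hh : ∀ t ≥ t₀, HasDerivAt h (-(c t * θ t * h t)) t)
    (hρ : ∀ t ≥ t₀, HasDerivAt ρ (-(θ t * ρ t)) t)
    (hεp : ∀ t ≥ t₀, ε t + p t = ρ t * h t)
    (hray : ∀ t ≥ t₀, θ' t = -(3 / 2) * (ε t + p t)) :
    Tendsto (fun t => ε t + p t) atTop (nhds 0) ∧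
    (∀ t ≥ t₀, -(3 / 2) * (ε t + p t) ≤ Ξ) := by
  refine ⟨?_, fun t ht => hray t ht ▸ hθ' t ht⟩
  have hρh : ∀ t ≥ t₀, HasDerivAt (ρ * h)
      (-((θ t + c t * θ t) * (ρ t * h t))) t := fun t ht =>
    ((hρ t ht).mul (hh t ht)).congr_deriv (by ring)
  have hrate : ∀ t ≥ t₀, k ≤ θ t + c t * θ t := by
    intro t ht
    have hθ : 0 < θ t := pos_of_mul_pos_right (hk.trans_le (hcθ t ht)) (hc t ht).1.le
    linarith [hcθ t ht]
  refine (tendsto_zero_of_hasDerivAt_neg_mul hk hρh hrate).congr' ?_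
  filter_upwards [eventually_ge_atTop t₀] with t ht using (hεp t ht).symm

/-- Proposition 3: a perfect fluid along an expanding congruence in flat FRW with bounded
rate of expansion (`θ̇ ≤ Ξ`), conserved rest-mass (`ρ̇ = −θρ`, `ḣ = −c_s²θh`),
`c_s²(t) ∈ (0,1]` with `c_s²θ ≥ k > 0`, and Raychaudhuri–Friedmann relation
`θ̇ = −(3/2)(ε + p)` has `ε + p → 0` asymptotically and `−(3/2)(ε + p) ≤ Ξ`. -/
theorem prop3_bounded_expansion
    (t₀ k Ξ h₀ ρ₀ : ℝ) (hk : 0 < k) (hh₀ : 0 < h₀) (hρ₀ : 0 < ρ₀)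
    (c θ θ' h ρ ε p : ℝ → ℝ) (hccont : Continuous c) (hθcont : Continuous θ)
    (hc : ∀ t ≥ t₀, 0 < c t ∧ c t ≤ 1)
    (hcθ : ∀ t ≥ t₀, k ≤ c t * θ t)
    (hθd : ∀ t ≥ t₀, HasDerivAt θ (θ' t) t)
    (hθ' : ∀ t ≥ t₀, θ' t ≤ Ξ)
    (hh : ∀ t ≥ t₀, HasDerivAt h (-(c t * θ t * h t)) t)
    (hρ : ∀ t ≥ t₀, HasDerivAt ρ (-(θ t * ρ t)) t)
    (hhinit : h t₀ = h₀) (hρinit : ρ t₀ = ρ₀)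
    (hεp : ∀ t ≥ t₀, ε t + p t = ρ t * h t)
    (hray : ∀ t ≥ t₀, θ' t = -(3 / 2) * (ε t + p t)) :
    Tendsto (fun t => ε t + p t) atTop (nhds 0) ∧
    (∀ t ≥ t₀, -(3 / 2) * (ε t + p t) ≤ Ξ) :=
  prop3_bounded_expansion_general t₀ k Ξ hk c θ θ' h ρ ε p hc hcθ hθ' hh hρ hεp hray
end
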